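/- Let σ ∈ 𝒞_q with des(σ) = d, let k > d, and let n = (n₁,…,n_q) be a σ-admissible vector in degree k. Then there are exactly n_q realizations 𝒪 of σ under m_k with fix(𝒪) = n. More precisely, for each integer 0 ≤ n < n_q there is a unique realization 𝒪_n = {x₁,…,x_q} of σ under m_k with fixed point distribution (n₁,…,n_q) and with exactly n fixed points of m_k in the interval (0, x₁); consequently 𝒪_n = 𝒪_0 + n/(k−1) (mod ℤ) for 0 ≤ n < n_q. -/

import Mathlib

open scoped Classical

noncomputable section

/-- The representative of `i : ZMod q` in `{1, …, q}`. -/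
def rep (q : ℕ) [NeZero q] (i : ZMod q) : ℕ :=
  if i = 0 then q else i.val

/-- The rotation `ρ : i ↦ i + 1 (mod q)` of `ZMod q`. -/
def rotPerm (q : ℕ) : Equiv.Perm (ZMod q) :=
  Equiv.addRight 1

/-- The descent number `des σ`: the number of `i ∈ ZMod q` with `σ(i) > σ(i+1)`,
values compared via their representatives in `{1, …, q}`. -/
def desNum (q : ℕ) [NeZero q] (σ : Equiv.Perm (ZMod q)) : ℕ :=
  (Finset.univ.filter fun i : ZMod q => rep q (σ (i + 1)) < rep q (σ i)).card

/-- `σ` is a `q`-cycle, i.e. it acts transitively on `ZMod q`. -/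
def IsQCycle (q : ℕ) (σ : Equiv.Perm (ZMod q)) : Prop :=
  ∀ i j : ZMod q, ∃ n : ℕ, (σ ^ n) i = j

/-- The transition matrix of `σ`: the `(i,j)` entry is `1` if `j` lies in the
cyclic interval `[σ(i), σ(i+1))` of `ZMod q` and `0` otherwise. -/
def transMatrix (q : ℕ) [NeZero q] (σ : Equiv.Perm (ZMod q)) :
    Matrix (ZMod q) (ZMod q) ℝ :=
  Matrix.of fun i j => if (j - σ i).val < (σ (i + 1) - σ i).val then (1 : ℝ) else 0

/-- A probability vector: non-negative components summing to `1`. -/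
def IsProbVec (q : ℕ) [NeZero q] (v : ZMod q → ℝ) : Prop :=
  (∀ i, 0 ≤ v i) ∧ ∑ i, v i = 1

/-- The symmetry order of `σ`: the order of the stabilizer of `σ` in the rotation
group `⟨ρ⟩` acting by conjugation. -/
def symOrder (q : ℕ) [NeZero q] (σ : Equiv.Perm (ZMod q)) : ℕ :=
  ((Finset.range q).filter fun j => rotPerm q ^ j * σ * (rotPerm q ^ j)⁻¹ = σ).card

/-- `F : ℝ → ℝ` is a lift of a degree `k` covering map of `ℝ/ℤ`:
a homeomorphism of `ℝ` with `F (t+1) = F t + k`. -/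
def IsDegreeLift (k : ℕ) (F : ℝ → ℝ) : Prop :=
  Continuous F ∧ StrictMono F ∧ ∀ t, F (t + 1) = F t + k

/-- The fixed point of the circle map corresponding to `u` (a point with
`F u - u ∈ ℤ`) is topologically repelling: `t ↦ F t - t` is strictly increasing
in a neighborhood of `u`. -/
def TopRepelling (F : ℝ → ℝ) (u : ℝ) : Prop :=
  ∃ ε > 0, StrictMonoOn (fun t => F t - t) (Set.Ioo (u - ε) (u + ε))

/-- `x : ZMod q → ℝ` is a period `q` orbit realizing `σ` for the circle map with
lift `F`: the points `x i` lie in `(0,1)` and are increasing with respect to the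
representatives `{1, …, q}` (so that `0, x₁, …, x_q` are in positive cyclic
order), and on the circle `f(x i) = x (σ i)` for all `i`. -/
def IsRealization (q : ℕ) [NeZero q] (σ : Equiv.Perm (ZMod q))
    (F : ℝ → ℝ) (x : ZMod q → ℝ) : Prop :=
  (∀ i, x i ∈ Set.Ioo (0 : ℝ) 1) ∧
  (∀ i j : ZMod q, rep q i < rep q j → x i < x j) ∧
  (∀ i, ∃ m : ℤ, F (x i) = x (σ i) + m)

/-- A realization of `σ` under the multiplication map `m_k : x ↦ kx (mod ℤ)`. -/
def MkRealization (q k : ℕ) [NeZero q] (σ : Equiv.Perm (ZMod q)) (x : ZMod q → ℝ) : Prop :=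
  IsRealization q σ (fun t => (k : ℝ) * t) x

/-- The upper endpoint (as a real number) of the partition interval
`I i = [x i, x (i+1)]`; for `i = 0 ≡ q` the interval wraps around `0 ∈ ℝ/ℤ`
and the endpoint is `x 1 + 1`. -/
def upperPt (q : ℕ) [NeZero q] (x : ZMod q → ℝ) (i : ZMod q) : ℝ :=
  if i = 0 then x 1 + 1 else x (i + 1)

/-- The `i`-th component of the fixed point distribution: the number of fixed
points of `m_k` (the points `j/(k-1) (mod ℤ)`) in the interior of the partition
interval `I i`. -/
def fixDist (q k : ℕ) [NeZero q] (x : ZMod q → ℝ) (i : ZMod q) : ℕ :=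
  ((Finset.Icc 1 (2 * (k - 1))).filter fun j : ℕ =>
    x i < (j : ℝ) / ((k : ℝ) - 1) ∧ (j : ℝ) / ((k : ℝ) - 1) < upperPt q x i).card

/-- The number of fixed points of `m_k` in the interval `(0, x 1)`. -/
def countFixBelow (q k : ℕ) [NeZero q] (x : ZMod q → ℝ) : ℕ :=
  ((Finset.range (k - 1)).filter fun j : ℕ =>
    0 < j ∧ (j : ℝ) / ((k : ℝ) - 1) < x 1).card

/-- The `m`-th component of the (cumulative) deployment vector: the number of
orbit points in `(0, m/(k-1))`. -/
def depCount (q k : ℕ) [NeZero q] (x : ZMod q → ℝ) (m : ℕ) : ℕ :=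
  (Finset.univ.filter fun j : ZMod q => x j < (m : ℝ) / ((k : ℝ) - 1)).card

/-- The rank of a marked index `i` among the marked indices `i₁ < ⋯ < i_{d-1}`
(ordered by their representatives in `{1, …, q}`). -/
def markRank (q : ℕ) [NeZero q] (σ : Equiv.Perm (ZMod q)) (i : ZMod q) : ℕ :=
  (Finset.univ.filter fun i' : ZMod q =>
    transMatrix q σ i' i' = 1 ∧ rep q i' ≤ rep q i).card


/-!
A realization `x` of `σ` under `m_k` satisfies `k * x i = x (σ i) + D i` with integer digits
`D i`, and since `x (σ i) - x i ∈ (-1, 1)` has the sign prescribed by `σ`, the digit is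
`D i = ⌊(k - 1) * x i⌋ + [σ i < i]`. The floor counts the fixed points `j / (k - 1)` in
`(0, x i)`, so the fixed point distribution `n` and the number `m` of fixed points in `(0, x 1)`
determine all digits, and the digits determine `x` because `x ↦ k x - x ∘ σ` is invertible.
Conversely, for every `m < n_q` the solution with these digits is a realization: admissibility
makes the digits lexicographically increasing along `σ`-orbits, which puts the points in the
right order. Raising `m` by one adds `1` to every digit, i.e. rotates the orbit by `1 / (k - 1)`.
-/

section Rep

variable {q : ℕ} [NeZero q]

lemma rep_pos (i : ZMod q) : 0 < rep q i := by
  unfold rep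
  split_ifs with h
  · exact NeZero.pos q
  · exact ZMod.val_pos.2 h

lemma rep_le (i : ZMod q) : rep q i ≤ q := by
  unfold rep
  split_ifs
  exacts [le_rfl, (ZMod.val_lt i).le]

lemma rep_zero : rep q (0 : ZMod q) = q := by
  simp [rep]

lemma rep_lt_iff_ne_zero (i : ZMod q) : rep q i < q ↔ i ≠ 0 := by
  unfold rep
  split_ifs with h
  · simp [h]
  · simp [h, ZMod.val_lt]

lemma natCast_rep (i : ZMod q) : ((rep q i : ℕ) : ZMod q) = i := by
  unfold rep
  split_ifs with h
  · simp [h]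
  · exact ZMod.natCast_zmod_val i

lemma rep_injective : Function.Injective (rep q) := fun i j h => by
  rw [← natCast_rep i, ← natCast_rep j, h]

lemma rep_natCast {v : ℕ} (h1 : 1 ≤ v) (h2 : v ≤ q) : rep q (v : ZMod q) = v := by
  rcases h2.lt_or_eq with hlt | rfl
  · have hval : (v : ZMod q).val = v := ZMod.val_natCast_of_lt hlt
    have hne : (v : ZMod q) ≠ 0 := fun h => by simp [h] at hval; omega
    simp [rep, hne, hval]
  · simp [rep]

lemma rep_add_one (i : ZMod q) : rep q (i + 1) = i.val + 1 := by
  have : i + 1 = ((i.val + 1 : ℕ) : ZMod q) := by push_cast [ZMod.natCast_zmod_val]; rfl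
  rw [this, rep_natCast le_add_self (ZMod.val_lt i)]

lemma rep_add_one_of_ne_zero {i : ZMod q} (hi : i ≠ 0) : rep q (i + 1) = rep q i + 1 := by
  rw [rep_add_one, rep, if_neg hi]

lemma rep_one : rep q (1 : ZMod q) = 1 := by
  simpa using rep_add_one (0 : ZMod q)

lemma rep_induction {P : ZMod q → Prop} (one : P 1) (succ : ∀ i, i ≠ 0 → P i → P (i + 1))
    (i : ZMod q) : P i := by
  have key : ∀ v : ℕ, 1 ≤ v → v ≤ q → P v := by
    intro v hv
    induction v, hv using Nat.le_induction with
    | base => exact fun _ => by simpa using one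
    | succ v hv ih =>
      intro hvq
      have hne : (v : ZMod q) ≠ 0 := by
        rw [← rep_lt_iff_ne_zero, rep_natCast hv (by omega)]; omega
      simpa using succ _ hne (ih (by omega))
  simpa [natCast_rep] using key (rep q i) (rep_pos i) (rep_le i)

lemma val_sub_add_rep (a b : ZMod q) :
    (a - b).val + rep q b = rep q a + if rep q a < rep q b then q else 0 := by
  have ha := rep_pos a; have ha' := rep_le a; have hb := rep_pos b; have hb' := rep_le b
  have hN : rep q b ≤ rep q a + (if rep q a < rep q b then q else 0) := by split_ifs <;> omega
  have hlt : rep q a + (if rep q a < rep q b then q else 0) - rep q b < q := by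
    split_ifs <;> omega
  have hcast : (((rep q a + (if rep q a < rep q b then q else 0) - rep q b : ℕ)) : ZMod q)
      = a - b := by
    rw [Nat.cast_sub hN]
    split_ifs <;> simp [natCast_rep]
  rw [← hcast, ZMod.val_natCast_of_lt hlt]
  omega

end Rep

lemma IsQCycle.apply_ne {q : ℕ} {σ : Equiv.Perm (ZMod q)} (hσ : IsQCycle q σ) (hq : 2 ≤ q)
    (i : ZMod q) : σ i ≠ i := by
  have : Fact (1 < q) := ⟨hq⟩
  intro h
  obtain ⟨n, hn⟩ := hσ i (i + 1)
  rw [Equiv.Perm.pow_apply_eq_self_of_apply_eq_self h] at hn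
  simp at hn

section Digits

variable {q : ℕ} [NeZero q] (σ : Equiv.Perm (ZMod q)) (n : ZMod q → ℕ) (m : ℕ)

def wrap (i : ZMod q) : ℕ :=
  if rep q (σ i) < rep q i then 1 else 0

/-- The representative of `σ l` in the window `(rep l, rep l + q)`. -/
def liftRep (l : ZMod q) : ℕ :=
  rep q (σ l) + q * wrap σ l

/-- The number of fixed points of `m_k` in `(0, x i)` for a realization with fixed point
distribution `n` and `m` fixed points in `(0, x 1)`. -/
def fixBelowAt (i : ZMod q) : ℕ :=
  m + ∑ l ∈ Finset.univ.filter (fun l => rep q l < rep q i), n l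

/-- The digits of such a realization: `k * x i = x (σ i) + digit σ n m i`. -/
def digit (i : ZMod q) : ℕ :=
  fixBelowAt n m i + wrap σ i

variable {σ n m}

lemma wrap_zero (hσ : IsQCycle q σ) (hq : 2 ≤ q) : wrap σ 0 = 1 := by
  rw [wrap, rep_zero, if_pos ((rep_lt_iff_ne_zero _).2 (hσ.apply_ne hq 0))]

lemma wrap_one : wrap σ 1 = 0 := by
  rw [wrap, rep_one, if_neg (Nat.not_lt.2 (rep_pos _))]

lemma fixBelowAt_one : fixBelowAt n m 1 = m := by
  simp [fixBelowAt, rep_one, (rep_pos _).ne']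

lemma fixBelowAt_add_one {i : ZMod q} (hi : i ≠ 0) :
    fixBelowAt n m (i + 1) = fixBelowAt n m i + n i := by
  have : Finset.univ.filter (fun l => rep q l < rep q (i + 1)) =
      insert i (Finset.univ.filter (fun l => rep q l < rep q i)) := by
    ext l
    simp only [Finset.mem_filter, Finset.mem_univ, true_and, Finset.mem_insert,
      rep_add_one_of_ne_zero hi, Nat.lt_succ_iff_lt_or_eq, rep_injective.eq_iff]
    tauto
  rw [fixBelowAt, fixBelowAt, this, Finset.sum_insert (by simp)]
  ring

lemma fixBelowAt_zero_add : fixBelowAt n m 0 + n 0 = m + ∑ i, n i := by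
  have : Finset.univ.filter (fun l => rep q l < rep q (0 : ZMod q)) = Finset.univ.erase 0 := by
    ext l
    simp [rep_zero, rep_lt_iff_ne_zero]
  rw [fixBelowAt, this, add_assoc, Finset.sum_erase_add _ _ (Finset.mem_univ 0)]

lemma fixBelowAt_mono {i j : ZMod q} (hij : rep q i ≤ rep q j) :
    fixBelowAt n m i ≤ fixBelowAt n m j := by
  unfold fixBelowAt
  gcongr

lemma liftRep_lt_liftRep_add_one (hσ : IsQCycle q σ) (hq : 2 ≤ q) {l : ZMod q} (hl : l ≠ 0)
    (hl' : transMatrix q σ l l ≠ 1) : liftRep σ l < liftRep σ (l + 1) := by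
  have hunmarked : ¬ (l - σ l).val < (σ (l + 1) - σ l).val :=
    fun h => hl' (by simp [transMatrix, h])
  have h1 := val_sub_add_rep l (σ l)
  have h2 := val_sub_add_rep (σ (l + 1)) (σ l)
  have hA := rep_add_one_of_ne_zero hl
  have hAq := (rep_lt_iff_ne_zero l).2 hl
  have hB : rep q (σ l) ≠ rep q l := rep_injective.ne (hσ.apply_ne hq l)
  have hC : rep q (σ (l + 1)) ≠ rep q (l + 1) := rep_injective.ne (hσ.apply_ne hq (l + 1))
  have hBC : rep q (σ (l + 1)) ≠ rep q (σ l) :=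
    rep_injective.ne (σ.injective.ne (by have : Fact (1 < q) := ⟨hq⟩; simp))
  have := rep_pos (σ l); have := rep_pos (σ (l + 1)); have := rep_le (σ l)
  have := rep_le (σ (l + 1))
  unfold liftRep wrap
  split_ifs at * <;> omega

/-- Between two indices with the same `fixBelowAt` there is no marked index (by admissibility),
and along unmarked indices `liftRep` increases. -/
lemma liftRep_lt_of_fixBelowAt_eq (hσ : IsQCycle q σ) (hq : 2 ≤ q)
    (hadm : ∀ l, transMatrix q σ l l = 1 → 1 ≤ n l) {i j : ZMod q} (hij : rep q i < rep q j)
    (heq : fixBelowAt n m i = fixBelowAt n m j) : liftRep σ i < liftRep σ j := by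
  induction j using rep_induction with
  | one => exact absurd hij (by simp [rep_one, (rep_pos i).ne'])
  | succ j hj ih =>
    rw [rep_add_one_of_ne_zero hj] at hij
    rw [fixBelowAt_add_one hj] at heq
    have hle := fixBelowAt_mono (n := n) (m := m) (Nat.le_of_lt_succ hij)
    have hnj : n j = 0 := by omega
    have hstep := liftRep_lt_liftRep_add_one hσ hq hj (fun h => by have := hadm j h; omega)
    rcases (Nat.le_of_lt_succ hij).lt_or_eq with hlt | hij'
    · exact (ih hlt (by omega)).trans hstep
    · rwa [rep_injective hij']

lemma eq_fixBelowAt {A : ZMod q → ℕ} (h : ∀ i, i ≠ 0 → A (i + 1) = A i + n i) :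
    A = fixBelowAt n (A 1) := by
  funext i
  induction i using rep_induction with
  | one => exact fixBelowAt_one.symm
  | succ i hi ih => rw [h i hi, fixBelowAt_add_one hi, ih]

theorem digit_lex (hσ : IsQCycle q σ) (hq : 2 ≤ q)
    (hadm : ∀ l, transMatrix q σ l l = 1 → 1 ≤ n l) {i j : ZMod q} (hij : rep q i < rep q j) :
    digit σ n m i < digit σ n m j ∨
      digit σ n m i = digit σ n m j ∧ rep q (σ i) < rep q (σ j) := by
  have := rep_pos (σ i); have := rep_le (σ j)
  unfold digit
  rcases (fixBelowAt_mono (n := n) (m := m) hij.le).lt_or_eq with hlt | heq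
  · unfold wrap
    split_ifs <;> omega
  · have := liftRep_lt_of_fixBelowAt_eq hσ hq hadm hij heq
    unfold liftRep wrap at *
    split_ifs at * <;> omega

lemma digit_le {k : ℕ} (hsum : ∑ i, n i = k - 1) (hm : m < n 0) (i : ZMod q) :
    digit σ n m i ≤ k - 1 := by
  have h0 := fixBelowAt_zero_add (n := n) (m := m)
  have hi := fixBelowAt_mono (n := n) (m := m) ((rep_le i).trans_eq rep_zero.symm)
  have : wrap σ i ≤ 1 := by unfold wrap; split_ifs <;> omega
  unfold digit
  omega

lemma one_le_digit_zero (hσ : IsQCycle q σ) (hq : 2 ≤ q) : 1 ≤ digit σ n m 0 := by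
  simp [digit, wrap_zero hσ hq]

lemma digit_one : digit σ n m 1 = m := by
  rw [digit, fixBelowAt_one, wrap_one, add_zero]

lemma digit_eq_digit_zero_add (i : ZMod q) : digit σ n m i = digit σ n 0 i + m := by
  simp only [digit, fixBelowAt]
  ring

end Digits

section HasDigits

variable {ι : Type*} {k : ℝ} {σ : ι → ι} {D x y : ι → ℝ}

/-- `x` is a periodic orbit of `t ↦ k t` on `ℝ / ℤ` following `σ`, with lifted digits `D`. -/
def HasDigits (k : ℝ) (σ : ι → ι) (D x : ι → ℝ) : Prop :=
  ∀ i, k * x i = x (σ i) + D i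

/-- A maximum of `|e|` is expanded by `|k| > 1` and yet bounds `|e ∘ σ|`. -/
lemma eq_zero_of_mul_eq_comp [Finite ι] (hk : 1 < |k|) {e : ι → ℝ}
    (he : ∀ i, k * e i = e (σ i)) : e = 0 := by
  by_contra hne
  obtain ⟨j, -⟩ := Function.ne_iff.1 hne
  have : Nonempty ι := ⟨j⟩
  obtain ⟨i, hi⟩ := Finite.exists_max fun i => |e i|
  have h := hi (σ i)
  rw [← he, abs_mul] at h
  have hi0 : |e i| = 0 := by nlinarith [abs_nonneg (e i)]
  exact hne (funext fun j => abs_nonpos_iff.1 (hi0 ▸ hi j))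

lemma HasDigits.unique [Finite ι] (hk : 1 < |k|) (hx : HasDigits k σ D x)
    (hy : HasDigits k σ D y) : x = y :=
  sub_eq_zero.1 <| eq_zero_of_mul_eq_comp (σ := σ) hk fun i => by
    simp only [Pi.sub_apply]; linear_combination hx i - hy i

/-- Solving `HasDigits` is inverting the linear map `x ↦ k x - x ∘ σ`, which is injective by
uniqueness, hence surjective in finite dimension. -/
lemma exists_hasDigits [Finite ι] (hk : 1 < |k|) (σ : ι → ι) (D : ι → ℝ) :
    ∃ x, HasDigits k σ D x := by
  let L : (ι → ℝ) →ₗ[ℝ] (ι → ℝ) := k • LinearMap.id - LinearMap.funLeft ℝ ℝ σ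
  have hL : ∀ x i, L x i = k * x i - x (σ i) := fun x i => rfl
  have hinj : Function.Injective L := by
    rw [← LinearMap.ker_eq_bot, LinearMap.ker_eq_bot']
    intro e he
    refine eq_zero_of_mul_eq_comp (σ := σ) hk fun i => ?_
    have := hL e i
    rw [he, Pi.zero_apply] at this
    linarith
  obtain ⟨x, hx⟩ := LinearMap.injective_iff_surjective.1 hinj D
  exact ⟨x, fun i => by have := hL x i; rw [hx] at this; linarith⟩

lemma HasDigits.add_const (hk : k ≠ 1) (hx : HasDigits k σ D x) (c : ℝ) :
    HasDigits k σ (fun i => D i + c) (fun i => x i + c / (k - 1)) := fun i => by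
  have : k - 1 ≠ 0 := sub_ne_zero.2 hk
  field_simp
  linear_combination (k - 1) * hx i

end HasDigits

section Orbit

variable {ι : Type*} {k : ℝ} {σ : Equiv.Perm ι} {D x : ι → ℝ}

lemma Set.MapsTo.mem_of_transitive {s : Set ι} (hs : Set.MapsTo σ s s)
    (hσ : ∀ i j, ∃ n : ℕ, (σ ^ n) i = j) {i : ι} (hi : i ∈ s) (j : ι) : j ∈ s := by
  obtain ⟨n, rfl⟩ := hσ i j
  rw [Equiv.Perm.coe_pow]
  exact hs.iterate n hi

/-- The extreme values of `x` lie in `[0, 1]`; the values `0` and `1` would propagate along the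
transitive `σ` and force all digits to be `0`, resp. `k - 1`. -/
theorem HasDigits.mem_Ioo [Finite ι] (hσ : ∀ i j, ∃ n : ℕ, (σ ^ n) i = j) (hk : 1 < k)
    (hx : HasDigits k σ D x) (hD : ∀ i, 0 ≤ D i ∧ D i ≤ k - 1) {i₀ i₁ : ι} (h₀ : 0 < D i₀)
    (h₁ : D i₁ < k - 1) (i : ι) : x i ∈ Set.Ioo 0 1 := by
  have : Nonempty ι := ⟨i₀⟩
  have hnonneg : ∀ i, 0 ≤ x i := by
    obtain ⟨j, hj⟩ := Finite.exists_min x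
    have := hx j; have := hj (σ j); have := (hD j).1
    exact fun i => le_trans (by nlinarith) (hj i)
  have hle : ∀ i, x i ≤ 1 := by
    obtain ⟨j, hj⟩ := Finite.exists_max x
    have := hx j; have := hj (σ j); have := (hD j).2
    exact fun i => le_trans (hj i) (by nlinarith)
  refine ⟨(hnonneg i).lt_of_ne' fun h => ?_, (hle i).lt_of_ne fun h => ?_⟩
  · have hs : Set.MapsTo σ {j | x j = 0} {j | x j = 0} := fun j (hj : x j = 0) => by
      have := hx j; have := hnonneg (σ j); have := (hD j).1
      show x (σ j) = 0
      rw [hj] at *; linarith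
    have h1 : x i₀ = 0 := hs.mem_of_transitive hσ h i₀
    have h2 : x (σ i₀) = 0 := hs.mem_of_transitive hσ h (σ i₀)
    have := hx i₀
    rw [h1, h2] at this; linarith
  · have hs : Set.MapsTo σ {j | x j = 1} {j | x j = 1} := fun j (hj : x j = 1) => by
      have := hx j; have := hle (σ j); have := (hD j).2
      show x (σ j) = 1
      rw [hj] at *; linarith
    have h1 : x i₁ = 1 := hs.mem_of_transitive hσ h i₁
    have h2 : x (σ i₁) = 1 := hs.mem_of_transitive hσ h (σ i₁)
    have := hx i₁
    rw [h1, h2] at this; linarith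

/-- If the digits are lexicographically increasing along `σ`-orbits, so is `x`: `σ` maps a pair
in the wrong order to a pair in the wrong order, and following `σ` from `j` back to `i` turns
a wrong pair `(i, j)` into the wrong pair `(σᴺ i, i)` of smaller rank. -/
theorem HasDigits.lt_of_lex (hσ : ∀ i j, ∃ n : ℕ, (σ ^ n) i = j) (hk : 0 < k)
    (hx : HasDigits k σ D x) (hmem : ∀ i, x i ∈ Set.Ioo 0 1) (r : ι → ℕ)
    (hD : ∀ i j, r i < r j → D i + 1 ≤ D j ∨ D i = D j ∧ r (σ i) < r (σ j))
    {i j : ι} (hij : r i < r j) : x i < x j := by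
  have hstep : ∀ a b, r a < r b → x b ≤ x a → r (σ a) < r (σ b) ∧ x (σ b) ≤ x (σ a) := by
    intro a b hab hba
    have := hx a; have := hx b; have := mul_le_mul_of_nonneg_left hba hk.le
    rcases hD a b hab with hlt | ⟨heq, hr⟩
    · have := hmem (σ a); have := hmem (σ b)
      exact absurd hlt (by simp only [Set.mem_Ioo] at *; linarith)
    · exact ⟨hr, by linarith⟩
  have hiter : ∀ N : ℕ, ∀ a b, r a < r b → x b ≤ x a →
      r ((σ ^ N) a) < r ((σ ^ N) b) ∧ x ((σ ^ N) b) ≤ x ((σ ^ N) a) := by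
    intro N
    induction N with
    | zero => exact fun a b h1 h2 => ⟨h1, h2⟩
    | succ N ih =>
      intro a b h1 h2
      obtain ⟨h3, h4⟩ := ih a b h1 h2
      simpa only [pow_succ', Equiv.Perm.mul_apply] using hstep _ _ h3 h4
  induction hrj : r j using Nat.strong_induction_on generalizing i j with
  | _ R ih =>
    by_contra hji
    obtain ⟨N, hN⟩ := hσ j i
    obtain ⟨h1, h2⟩ := hiter N i j hij (not_lt.1 hji)
    rw [hN] at h1 h2
    exact (ih (r i) (hrj ▸ hij) h1 rfl).not_ge h2

end Orbit

lemma filter_div_mem_Ioo_eq_Icc {c y z : ℝ} (hc : 0 < c) {A B : ℕ} (hA : (A : ℝ) ≤ c * y)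
    (hA' : c * y < A + 1) (hB : (B : ℝ) < c * z) (hB' : c * z ≤ B + 1) {s : Finset ℕ}
    (hs : Finset.Icc (A + 1) B ⊆ s) :
    s.filter (fun j : ℕ => y < j / c ∧ j / c < z) = Finset.Icc (A + 1) B := by
  ext j
  simp only [Finset.mem_filter, lt_div_iff₀' hc, div_lt_iff₀' hc]
  constructor
  · rintro ⟨-, h1, h2⟩
    have h3 : A < j := by exact_mod_cast hA.trans_lt h1
    have h4 : j < B + 1 := by exact_mod_cast h2.trans_le hB'
    exact Finset.mem_Icc.2 ⟨h3, Nat.le_of_lt_succ h4⟩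
  · intro hj
    obtain ⟨h1, h2⟩ := Finset.mem_Icc.1 hj
    have h3 : (A : ℝ) + 1 ≤ j := by exact_mod_cast h1
    have h4 : (j : ℝ) ≤ B := by exact_mod_cast h2
    exact ⟨hs hj, by linarith, by linarith⟩

section Realization

variable {q k : ℕ} [NeZero q] {σ : Equiv.Perm (ZMod q)} {x : ZMod q → ℝ}

lemma sub_one_pos_of_two_le (hk : 2 ≤ k) : (0 : ℝ) < k - 1 := by
  have : (2 : ℝ) ≤ k := by exact_mod_cast hk
  linarith

lemma lt_sub_one_of_lt_mul {A : ℕ} {u : ℝ} (hk : 1 ≤ k) (hA : (A : ℝ) < (k - 1) * u)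
    (hu : u < 1) : A < k - 1 := by
  have hk' : (1 : ℝ) ≤ k := by exact_mod_cast hk
  have : (A : ℝ) < ((k - 1 : ℕ) : ℝ) := by push_cast [hk]; nlinarith
  exact_mod_cast this

/-- For a point of a realization, `(k - 1) x i = N + (wrap σ i + x (σ i) - x i)`, and the
bracket lies in `(0, 1)` since `x (σ i) < x i` exactly when `wrap σ i = 1`. -/
lemma sub_one_mul_mem_Ioo {k N : ℝ} (hmem : ∀ i, x i ∈ Set.Ioo 0 1)
    (hmono : ∀ i j, rep q i < rep q j → x i < x j) {i : ZMod q} (hi : σ i ≠ i)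
    (hfe : k * x i = x (σ i) + (N + wrap σ i)) : (k - 1) * x i ∈ Set.Ioo N (N + 1) := by
  have h := hmem i; have h' := hmem (σ i)
  have hne : rep q (σ i) ≠ rep q i := rep_injective.ne hi
  simp only [Set.mem_Ioo] at h h'
  have hk : (k - 1) * x i = k * x i - x i := by ring
  unfold wrap at hfe
  split_ifs at hfe with hlt
  · have := hmono _ _ hlt
    push_cast at hfe
    constructor <;> linarith
  · have := hmono _ _ (by omega : rep q i < rep q (σ i))
    push_cast at hfe
    constructor <;> linarith

lemma fixDist_eq_of_floor (A : ZMod q → ℕ) (hk : 2 ≤ k) (hx : ∀ i, x i < 1)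
    (hA : ∀ i, (k - 1) * x i ∈ Set.Ioo (A i : ℝ) (A i + 1)) (i : ZMod q) :
    fixDist q k x i = (if i = 0 then A 1 + (k - 1) else A (i + 1)) - A i := by
  have hc := sub_one_pos_of_two_le hk
  have hAk : ∀ j, A j < k - 1 := fun j => lt_sub_one_of_lt_mul (by omega) (hA j).1 (hx j)
  rw [fixDist, upperPt]
  split_ifs with hi
  · have hB : ((A 1 + (k - 1) : ℕ) : ℝ) = A 1 + (k - 1) := by
      push_cast [show 1 ≤ k by omega]; ring
    rw [filter_div_mem_Ioo_eq_Icc hc (hA i).1.le (hA i).2 (B := A 1 + (k - 1))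
      (by rw [hB]; linarith [(hA 1).1]) (by rw [hB]; linarith [(hA 1).2])
      (Finset.Icc_subset_Icc (by omega) (by have := hAk 1; omega)), Nat.card_Icc]
    omega
  · rw [filter_div_mem_Ioo_eq_Icc hc (hA i).1.le (hA i).2 (hA (i + 1)).1 (hA (i + 1)).2.le
      (Finset.Icc_subset_Icc (by omega) (by have := hAk (i + 1); omega)), Nat.card_Icc]
    omega

lemma countFixBelow_eq_of_floor (hk : 2 ≤ k) {a : ℕ} (hx : x 1 < 1)
    (hA : (k - 1) * x 1 ∈ Set.Ioo (a : ℝ) (a + 1)) : countFixBelow q k x = a := by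
  have hc := sub_one_pos_of_two_le hk
  have hAk := lt_sub_one_of_lt_mul (by omega) hA.1 hx
  have : (Finset.range (k - 1)).filter (fun j : ℕ => 0 < j ∧ (j : ℝ) / (k - 1) < x 1) =
      (Finset.range (k - 1)).filter
        (fun j : ℕ => 0 < (j : ℝ) / (k - 1) ∧ (j : ℝ) / (k - 1) < x 1) :=
    Finset.filter_congr fun j _ => by rw [div_pos_iff_of_pos_right hc, Nat.cast_pos]
  rw [countFixBelow, this, filter_div_mem_Ioo_eq_Icc hc (A := 0) (by simp) (by simp) hA.1
    hA.2.le (fun j hj => by simp only [Finset.mem_Icc, Finset.mem_range] at hj ⊢; omega),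
    Nat.card_Icc]
  omega

theorem exists_floor_of_mkRealization (hq : 2 ≤ q) (hσ : IsQCycle q σ) (hk : 2 ≤ k)
    (hx : MkRealization q k σ x) :
    ∃ A : ZMod q → ℕ, (∀ i, (k - 1) * x i ∈ Set.Ioo (A i : ℝ) (A i + 1)) ∧
      HasDigits k σ (fun i => (A i + wrap σ i : ℕ)) x := by
  obtain ⟨hmem, hmono, hint⟩ := hx
  choose D hD using hint
  beta_reduce at hD
  have hbr : ∀ i,
      (k - 1) * x i ∈ Set.Ioo ((D i - wrap σ i : ℤ) : ℝ) ((D i - wrap σ i : ℤ) + 1) :=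
    fun i => sub_one_mul_mem_Ioo hmem hmono (hσ.apply_ne hq i) (by push_cast; rw [hD i]; ring)
  have hnonneg : ∀ i, 0 ≤ D i - wrap σ i := fun i => by
    have : (-1 : ℝ) < ((D i - wrap σ i : ℤ) : ℝ) := by
      linarith [(hbr i).2, mul_pos (sub_one_pos_of_two_le hk) (hmem i).1]
    have : (-1 : ℤ) < D i - wrap σ i := by exact_mod_cast this
    omega
  choose A hA using fun i => Int.eq_ofNat_of_zero_le (hnonneg i)
  refine ⟨A, fun i => by simpa [hA i] using hbr i, fun i => ?_⟩
  have : ((A i + wrap σ i : ℕ) : ℤ) = D i := by push_cast; rw [← hA i]; ring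
  simp only [hD i, ← this, Int.cast_natCast]

end Realization

section Classification

variable {q k : ℕ} [NeZero q] {σ : Equiv.Perm (ZMod q)} {n : ZMod q → ℕ} {x : ZMod q → ℝ}

theorem hasDigits_of_mkRealization (hq : 2 ≤ q) (hσ : IsQCycle q σ) (hk : 2 ≤ k)
    (hx : MkRealization q k σ x) (hfix : ∀ i, fixDist q k x i = n i) :
    countFixBelow q k x < n 0 ∧
      HasDigits k σ (fun i => (digit σ n (countFixBelow q k x) i : ℝ)) x := by
  obtain ⟨A, hA, hD⟩ := exists_floor_of_mkRealization hq hσ hk hx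
  have hx1 : ∀ i, x i < 1 := fun i => (hx.1 i).2
  have hfixA := fixDist_eq_of_floor A hk hx1 hA
  have hc := sub_one_pos_of_two_le hk
  have hstep : ∀ i, i ≠ 0 → A (i + 1) = A i + n i := by
    intro i hi
    have hxi := hx.2.1 i (i + 1) (by rw [rep_add_one_of_ne_zero hi]; omega)
    have : (A i : ℝ) < A (i + 1) + 1 := by
      linarith [(hA i).1, (hA (i + 1)).2, mul_lt_mul_of_pos_left hxi hc]
    have : A i < A (i + 1) + 1 := by exact_mod_cast this
    have := hfix i
    rw [hfixA, if_neg hi] at this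
    omega
  have hAF := eq_fixBelowAt hstep
  rw [countFixBelow_eq_of_floor hk (hx1 1) (hA 1)]
  refine ⟨?_, fun i => ?_⟩
  · have h0 := hfix 0
    rw [hfixA, if_pos rfl] at h0
    have := lt_sub_one_of_lt_mul (by omega) (hA 0).1 (hx1 0)
    omega
  · have := hD i
    simp only [digit, ← congrFun hAF i] at this ⊢
    exact this

theorem mkRealization_of_hasDigits (hq : 2 ≤ q) (hσ : IsQCycle q σ) (hk : 2 ≤ k)
    (hadm : ∀ l, transMatrix q σ l l = 1 → 1 ≤ n l) (hsum : ∑ i, n i = k - 1) {m : ℕ}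
    (hm : m < n 0) (hx : HasDigits k σ (fun i => (digit σ n m i : ℝ)) x) :
    MkRealization q k σ x ∧ (∀ i, fixDist q k x i = n i) ∧ countFixBelow q k x = m := by
  have hk1 : ((k - 1 : ℕ) : ℝ) = k - 1 := by push_cast [show 1 ≤ k by omega]; ring
  have hn0 : n 0 ≤ k - 1 := hsum ▸ Finset.single_le_sum (fun i _ => Nat.zero_le (n i))
    (Finset.mem_univ 0)
  have hmem : ∀ i, x i ∈ Set.Ioo 0 1 := hx.mem_Ioo hσ (by exact_mod_cast hk)
    (fun i => ⟨Nat.cast_nonneg _, hk1 ▸ Nat.cast_le.2 (digit_le hsum hm i)⟩)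
    (i₀ := 0) (by exact_mod_cast one_le_digit_zero hσ hq)
    (i₁ := 1) (by rw [digit_one, ← hk1]; exact_mod_cast hm.trans_le hn0)
  have hmono : ∀ i j, rep q i < rep q j → x i < x j := fun i j hij =>
    hx.lt_of_lex hσ (by positivity) hmem (rep q)
      (fun a b hab => (digit_lex hσ hq hadm hab).imp (fun h => by exact_mod_cast h)
        fun h => ⟨by exact_mod_cast h.1, h.2⟩) hij
  have hA : ∀ i, (k - 1) * x i ∈ Set.Ioo (fixBelowAt n m i : ℝ) (fixBelowAt n m i + 1) :=
    fun i => sub_one_mul_mem_Ioo hmem hmono (hσ.apply_ne hq i) (by simpa [digit] using hx i)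
  refine ⟨⟨hmem, hmono, fun i => ⟨digit σ n m i, by simpa using hx i⟩⟩, fun i => ?_, ?_⟩
  · rw [fixDist_eq_of_floor _ hk (fun i => (hmem i).2) hA]
    split_ifs with hi
    · have := fixBelowAt_zero_add (n := n) (m := m)
      rw [hi, fixBelowAt_one]
      omega
    · rw [fixBelowAt_add_one hi]
      omega
  · rw [countFixBelow_eq_of_floor hk (hmem 1).2 (hA 1), fixBelowAt_one]

theorem mkRealization_fixDist_iff (hq : 2 ≤ q) (hσ : IsQCycle q σ) (hk : 2 ≤ k)
    (hadm : ∀ l, transMatrix q σ l l = 1 → 1 ≤ n l) (hsum : ∑ i, n i = k - 1) {m : ℕ} :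
    (MkRealization q k σ x ∧ (∀ i, fixDist q k x i = n i) ∧ countFixBelow q k x = m) ↔
      m < n 0 ∧ HasDigits k σ (fun i => (digit σ n m i : ℝ)) x :=
  ⟨fun ⟨hx, hfix, hm⟩ => hm ▸ hasDigits_of_mkRealization hq hσ hk hx hfix,
    fun ⟨hm, hx⟩ => mkRealization_of_hasDigits hq hσ hk hadm hsum hm hx⟩

lemma HasDigits.digit_add (hk : 2 ≤ k) (hx : HasDigits k σ (fun i => (digit σ n 0 i : ℝ)) x)
    (m : ℕ) : HasDigits k σ (fun i => (digit σ n m i : ℝ)) fun i => x i + m / (k - 1) := by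
  simpa [digit_eq_digit_zero_add (m := m)] using hx.add_const (by norm_cast; omega) (m : ℝ)

end Classification

theorem general_realization_fixed_point_distribution_general (q k : ℕ) [NeZero q]
    (hq : 2 ≤ q) (σ : Equiv.Perm (ZMod q)) (hσ : IsQCycle q σ)
    (n : ZMod q → ℕ) (hsum : ∑ i, n i = k - 1) (hn0 : 1 ≤ n 0)
    (hadm : ∀ i, transMatrix q σ i i = 1 → 1 ≤ n i) :
    ({x : ZMod q → ℝ | MkRealization q k σ x ∧ ∀ i, fixDist q k x i = n i}.ncard
        = n 0) ∧
    (∀ m : ℕ, m < n 0 → ∃! x : ZMod q → ℝ,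
        MkRealization q k σ x ∧ (∀ i, fixDist q k x i = n i) ∧
        countFixBelow q k x = m) ∧
    (∀ m : ℕ, m < n 0 → ∀ x₀ xm : ZMod q → ℝ,
        (MkRealization q k σ x₀ ∧ (∀ i, fixDist q k x₀ i = n i) ∧
          countFixBelow q k x₀ = 0) →
        (MkRealization q k σ xm ∧ (∀ i, fixDist q k xm i = n i) ∧
          countFixBelow q k xm = m) →
        Set.range xm
          = (fun t => Int.fract (t + (m : ℝ) / ((k : ℝ) - 1))) '' Set.range x₀) := by
  have hk : 2 ≤ k := by
    have := Finset.single_le_sum (fun i _ => Nat.zero_le (n i)) (Finset.mem_univ (0 : ZMod q))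
    omega
  have hk' : 1 < |(k : ℝ)| := by rw [Nat.abs_cast]; exact_mod_cast hk
  have hiff := fun m x => mkRealization_fixDist_iff (x := x) hq hσ hk hadm hsum (m := m)
  have hexu : ∀ m < n 0, ∃! x : ZMod q → ℝ,
      MkRealization q k σ x ∧ (∀ i, fixDist q k x i = n i) ∧ countFixBelow q k x = m := by
    intro m hm
    obtain ⟨x, hx⟩ := exists_hasDigits hk' σ fun i => (digit σ n m i : ℝ)
    exact ⟨x, (hiff m x).2 ⟨hm, hx⟩, fun y hy => ((hiff m y).1 hy).2.unique hk' hx⟩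
  refine ⟨?_, hexu, fun m _ x₀ xm h₀ hm => ?_⟩
  · rw [← Finset.card_range (n 0), ← Set.ncard_coe_finset]
    have hlt : ∀ x, MkRealization q k σ x ∧ (∀ i, fixDist q k x i = n i) →
        countFixBelow q k x < n 0 := fun x hx => ((hiff _ x).1 ⟨hx.1, hx.2, rfl⟩).1
    refine Set.ncard_congr (fun x _ => countFixBelow q k x)
      (fun x hx => Finset.mem_range.2 (hlt x hx))
      (fun x y hx hy hxy => (hexu _ (hlt x hx)).unique ⟨hx.1, hx.2, rfl⟩ ⟨hy.1, hy.2, hxy.symm⟩)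
      fun m hm => ?_
    obtain ⟨x, hx, -⟩ := hexu m (Finset.mem_range.1 hm)
    exact ⟨x, ⟨hx.1, hx.2.1⟩, hx.2.2⟩
  · have hxm := ((hiff m xm).1 hm).2.unique hk' (((hiff 0 x₀).1 h₀).2.digit_add hk m)
    rw [← Set.range_comp]
    congr 1
    funext i
    rw [Function.comp_apply, ← congrFun hxm i, eq_comm, Int.fract_eq_self]
    exact ⟨(hm.1.1 i).1.le, (hm.1.1 i).2⟩

/-- Let `σ` be a `q`-cycle with `des σ = d`, let `k > d`, and let `n` be a
`σ`-admissible vector in degree `k` (componentwise `n ≥ sig σ`, `∑ nᵢ = k - 1`,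
`n_q ≥ 1`, where the index `q ≡ 0`). Then there are exactly `n_q` realizations
`𝒪` of `σ` under `m_k` with `fix 𝒪 = n`; more precisely for each `0 ≤ m < n_q`
there is a unique such realization with exactly `m` fixed points of `m_k` in
`(0, x₁)`, and these realizations are rotated copies: `𝒪_m = 𝒪_0 + m/(k-1)`. -/
theorem general_realization_fixed_point_distribution (q d k : ℕ) [NeZero q]
    (hq : 2 ≤ q) (σ : Equiv.Perm (ZMod q)) (hσ : IsQCycle q σ)
    (hd : desNum q σ = d) (hk : d < k)
    (n : ZMod q → ℕ) (hsum : ∑ i, n i = k - 1) (hn0 : 1 ≤ n 0)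
    (hadm : ∀ i, transMatrix q σ i i = 1 → 1 ≤ n i) :
    ({x : ZMod q → ℝ | MkRealization q k σ x ∧ ∀ i, fixDist q k x i = n i}.ncard
        = n 0) ∧
    (∀ m : ℕ, m < n 0 → ∃! x : ZMod q → ℝ,
        MkRealization q k σ x ∧ (∀ i, fixDist q k x i = n i) ∧
        countFixBelow q k x = m) ∧
    (∀ m : ℕ, m < n 0 → ∀ x₀ xm : ZMod q → ℝ,
        (MkRealization q k σ x₀ ∧ (∀ i, fixDist q k x₀ i = n i) ∧
          countFixBelow q k x₀ = 0) →
        (MkRealization q k σ xm ∧ (∀ i, fixDist q k xm i = n i) ∧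
          countFixBelow q k xm = m) →
        Set.range xm
          = (fun t => Int.fract (t + (m : ℝ) / ((k : ℝ) - 1))) '' Set.range x₀) :=
  general_realization_fixed_point_distribution_general q k hq σ hσ n hsum hn0 hadm
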